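/- Let μ_i, μ̂_i : K → [0, ε] be functions with ∑_j μ_j(x) ∈ [m, M] for constants 0 < m ≤ M, and suppose |μ_i(x) − μ̂_i(x)| ≤ e for all i and all x ∈ K with 0 < e < m. Then for vectors x_1,…,x_n in a normed space, ‖∑_i μ̂_i(x)x_i/∑_j μ̂_j(x) − ∑_i μ_i(x)x_i/∑_j μ_j(x)‖ ≤ (n²Me/(m² − me)) · max_i ‖x_i‖ for all x ∈ K. -/
import Mathlib


theorem quadrature_perturbation_bound {X : Type*} [NormedAddCommGroup X]
    [NormedSpace ℝ X] {K : Type*} (n : ℕ) (hn : 1 ≤ n) (ε m M e : ℝ)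
    (x : Fin n → X) (μ μh : Fin n → K → ℝ)
    (hμ0 : ∀ i y, 0 ≤ μ i y) (hμε : ∀ i y, μ i y ≤ ε)
    (hμh0 : ∀ i y, 0 ≤ μh i y) (hμhε : ∀ i y, μh i y ≤ ε)
    (hm : 0 < m) (hmM : m ≤ M)
    (hsum : ∀ y : K, m ≤ ∑ j, μ j y ∧ ∑ j, μ j y ≤ M)
    (he : 0 < e) (hem : e < m)
    (hclose : ∀ i y, |μ i y - μh i y| ≤ e) :
    ∀ y : K,
      ‖(∑ j, μh j y)⁻¹ • (∑ i, μh i y • x i) -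
          (∑ j, μ j y)⁻¹ • (∑ i, μ i y • x i)‖ ≤
        (n ^ 2 * M * e / (m ^ 2 - m * e)) *
          (Finset.univ.sup' (Finset.univ_nonempty_iff.mpr
            (Fin.pos_iff_nonempty.mp hn)) fun i => ‖x i‖) := by
  intro y
  set XM : ℝ := Finset.univ.sup' (Finset.univ_nonempty_iff.mpr
      (Fin.pos_iff_nonempty.mp hn)) fun i => ‖x i‖ with hXM
  have hxX : ∀ i, ‖x i‖ ≤ XM := fun i =>
    Finset.le_sup' (fun j => ‖x j‖) (Finset.mem_univ i)
  have hX0 : 0 ≤ XM := le_trans (norm_nonneg (x ⟨0, hn⟩)) (hxX _)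
  have hSm : m ≤ ∑ j, μ j y := (hsum y).1
  have hSM : (∑ j, μ j y) ≤ M := (hsum y).2
  have hS0 : 0 < ∑ j, μ j y := lt_of_lt_of_le hm hSm
  have hme : 0 < m ^ 2 - m * e := by nlinarith
  have hM0 : (0:ℝ) ≤ M := hm.le.trans hmM
  have hRHS0 : 0 ≤ (n ^ 2 * M * e / (m ^ 2 - m * e)) * XM := by
    apply mul_nonneg _ hX0
    apply div_nonneg _ hme.le
    exact mul_nonneg (mul_nonneg (by positivity) hM0) he.le
  rcases eq_or_lt_of_le hn with h1 | h2
  · -- n = 1 : LHS is exactly 0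
    have hn1 : n = 1 := h1.symm
    subst hn1
    have h0 : m ≤ μ 0 y := by simpa [Fin.sum_univ_one] using hSm
    have hμh0p : 0 < μh 0 y := by
      have := hclose 0 y
      have := abs_le.mp this
      linarith [this.1]
    have hμ0p : 0 < μ 0 y := lt_of_lt_of_le hm h0
    simp only [Fin.sum_univ_one, smul_smul, inv_mul_cancel₀ hμh0p.ne',
      inv_mul_cancel₀ hμ0p.ne', one_smul, sub_self, norm_zero]
    exact hRHS0
  · -- n ≥ 2
    have hn2 : (2 : ℝ) ≤ n := by exact_mod_cast h2
    set S := ∑ j, μ j y with hS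
    set Sh := ∑ j, μh j y with hShdef
    set v := ∑ i, μ i y • x i with hv
    set vh := ∑ i, μh i y • x i with hvh
    have hSh0 : 0 ≤ Sh := Finset.sum_nonneg fun i _ => hμh0 i y
    have hkey : ∀ (c : Fin n → ℝ), (∀ i, 0 ≤ c i) →
        ‖∑ i, c i • x i‖ ≤ (∑ i, c i) * XM := by
      intro c hc
      calc ‖∑ i, c i • x i‖ ≤ ∑ i, ‖c i • x i‖ := norm_sum_le _ _
        _ ≤ ∑ i : Fin n, c i * XM := by
            apply Finset.sum_le_sum; intro i _
            rw [norm_smul, Real.norm_eq_abs, abs_of_nonneg (hc i)]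
            exact mul_le_mul_of_nonneg_left (hxX i) (hc i)
        _ = (∑ i, c i) * XM := (Finset.sum_mul _ _ _).symm
    have hvhX : ‖vh‖ ≤ Sh * XM := hkey _ fun i => hμh0 i y
    have hdiff : ‖vh - v‖ ≤ n * e * XM := by
      have : vh - v = ∑ i, (μh i y - μ i y) • x i := by
        rw [hvh, hv, ← Finset.sum_sub_distrib]
        simp [sub_smul]
      rw [this]
      calc ‖∑ i, (μh i y - μ i y) • x i‖ ≤ ∑ i, ‖(μh i y - μ i y) • x i‖ :=
            norm_sum_le _ _
        _ ≤ ∑ _i : Fin n, e * XM := by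
            apply Finset.sum_le_sum; intro i _
            rw [norm_smul, Real.norm_eq_abs]
            have h1 : |μh i y - μ i y| ≤ e := by
              rw [abs_sub_comm]; exact hclose i y
            exact mul_le_mul h1 (hxX i) (norm_nonneg _) he.le
        _ = n * e * XM := by
            rw [Finset.sum_const, Finset.card_univ, Fintype.card_fin]
            ring
    have hSdiff : |S - Sh| ≤ n * e := by
      calc |S - Sh| = |∑ i, (μ i y - μh i y)| := by
            rw [hS, hShdef, ← Finset.sum_sub_distrib]
        _ ≤ ∑ i, |μ i y - μh i y| := Finset.abs_sum_le_sum_abs _ _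
        _ ≤ ∑ _i : Fin n, e := Finset.sum_le_sum fun i _ => hclose i y
        _ = n * e := by
            rw [Finset.sum_const, Finset.card_univ, Fintype.card_fin]
            simp [nsmul_eq_mul]
    -- decomposition
    have hdecomp : Sh⁻¹ • vh - S⁻¹ • v = S⁻¹ • (vh - v) + (Sh⁻¹ - S⁻¹) • vh := by
      rw [smul_sub, sub_smul]; abel
    have hterm1 : ‖S⁻¹ • (vh - v)‖ ≤ S⁻¹ * (n * e * XM) := by
      rw [norm_smul, Real.norm_eq_abs, abs_of_nonneg (inv_nonneg.mpr hS0.le)]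
      exact mul_le_mul_of_nonneg_left hdiff (inv_nonneg.mpr hS0.le)
    have hterm2 : ‖(Sh⁻¹ - S⁻¹) • vh‖ ≤ S⁻¹ * (n * e * XM) := by
      rcases eq_or_lt_of_le hSh0 with hz | hpos
      · have hvh0 : ‖vh‖ ≤ 0 := by
          have := hvhX; rw [← hz] at this; simpa using this
        have : vh = 0 := norm_le_zero_iff.mp hvh0
        rw [this, smul_zero, norm_zero]
        positivity
      · rw [norm_smul, Real.norm_eq_abs]
        have habs : |Sh⁻¹ - S⁻¹| = |S - Sh| / (S * Sh) := by
          rw [inv_sub_inv hpos.ne' hS0.ne', abs_div, abs_of_pos (mul_pos hpos hS0),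
            mul_comm Sh S]
        rw [habs]
        calc |S - Sh| / (S * Sh) * ‖vh‖ ≤ |S - Sh| / (S * Sh) * (Sh * XM) := by
              apply mul_le_mul_of_nonneg_left hvhX
              positivity
          _ = |S - Sh| * XM / S := by
              field_simp
          _ ≤ n * e * XM / S := by
              gcongr
          _ = S⁻¹ * (n * e * XM) := by
              rw [div_eq_mul_inv]; ring
    calc ‖Sh⁻¹ • vh - S⁻¹ • v‖ ≤ ‖S⁻¹ • (vh - v)‖ + ‖(Sh⁻¹ - S⁻¹) • vh‖ := by
          rw [hdecomp]; exact norm_add_le _ _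
      _ ≤ S⁻¹ * (n * e * XM) + S⁻¹ * (n * e * XM) := add_le_add hterm1 hterm2
      _ = 2 * (n * e * XM) / S := by rw [div_eq_mul_inv]; ring
      _ ≤ 2 * (n * e * XM) / m := by
          apply div_le_div_of_nonneg_left _ hm hSm
          positivity
      _ ≤ (n ^ 2 * M * e / (m ^ 2 - m * e)) * XM := by
          rw [div_le_iff₀ hm, div_mul_eq_mul_div, div_mul_eq_mul_div, le_div_iff₀ hme]
          have hfac : (0:ℝ) ≤ e * XM * m * n := by positivity
          have h1 : 2 * (m - e) ≤ (n:ℝ) * M := by nlinarith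
          nlinarith [mul_le_mul_of_nonneg_left h1 hfac]
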